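/- Let a < b, ω = π/(b−a), φ_m(x) = √2cos(mω(x−a)) for m ≥ 1 and φ_0 ≡ 1. Let n ≥ 1 and let (x_i, w_i) be the midpoint rule nodes x_i = a + (i−1/2)(b−a)/n with weights w_i = 1/n. Then for all integers j, k with 0 ≤ j < n and 0 ≤ k ≤ n: ∑_{i=1}^n w_iφ_j(x_i)φ_k(x_i) = δ_{j,k} = (1/(b−a))∫_a^b φ_jφ_k dx; i.e., the midpoint quadrature preserves the L² orthonormality of φ_0,…,φ_n restricted to these index ranges. -/

import Mathlib

/-!
Writing `φ_m = s_m cos (m ω (x - a))` with `s_0 = 1`, `s_m = √2`, the product-to-sum formula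
turns `φ_j φ_k` into `s_j s_k / 2 · (cos ((j - k) ω (x - a)) + cos ((j + k) ω (x - a)))`,
so both the midpoint rule and the normalized integral only need to be evaluated on
`cos (m ω (x - a))` with `|m| < 2n`. The integral is `[m = 0]` since `ω (b - a) = π`. At the
nodes the cosines are `cos ((i - 1/2) m π / n)`, and multiplying their sum by `2 sin (m π / 2n)`
telescopes to `sin (m π) = 0`; the restriction `|m| < 2n` is exactly what keeps
`sin (m π / 2n)` nonzero for `m ≠ 0`.
-/

open Real Finset intervalIntegral

noncomputable def phiU (a ω : ℝ) (m : ℕ) (x : ℝ) : ℝ :=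
  if m = 0 then 1 else Real.sqrt 2 * Real.cos (m * ω * (x - a))

theorem Real.two_mul_sin_half_mul_sum_Icc_cos_midpoint (θ : ℝ) (n : ℕ) :
    2 * sin (θ / 2) * ∑ i ∈ Icc 1 n, cos (((i : ℝ) - 1 / 2) * θ) = sin (n * θ) := by
  induction n with
  | zero => simp
  | succ n ih =>
    have hsub : θ / 2 - (((n + 1 : ℕ) : ℝ) - 1 / 2) * θ = -(n * θ) := by push_cast; ring
    have hadd : θ / 2 + (((n + 1 : ℕ) : ℝ) - 1 / 2) * θ = (n + 1 : ℕ) * θ := by push_cast; ring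
    rw [sum_Icc_succ_top (by omega), mul_add, ih, two_mul_sin_mul_cos, hsub, hadd, sin_neg]
    ring

theorem Real.sin_int_mul_pi_div_ne_zero {n : ℕ} {m : ℤ} (hm0 : m ≠ 0) (hm : |m| < n) :
    sin (m * π / n) ≠ 0 := by
  have hn : (0 : ℝ) < n := by exact_mod_cast (abs_nonneg m).trans_lt hm
  have hm' : |(m : ℝ)| < n := by exact_mod_cast hm
  rw [abs_lt] at hm'
  rw [Ne, sin_eq_zero_iff_of_lt_of_lt (by rw [lt_div_iff₀ hn]; nlinarith [pi_pos])
    (by rw [div_lt_iff₀ hn]; nlinarith [pi_pos])]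
  exact div_ne_zero (mul_ne_zero (Int.cast_ne_zero.mpr hm0) pi_ne_zero) hn.ne'

theorem Real.sum_Icc_cos_midpoint_int_mul_pi_div {n : ℕ} {m : ℤ} (hm : |m| < 2 * n) :
    ∑ i ∈ Icc 1 n, cos (((i : ℝ) - 1 / 2) * (m * π / n)) = if m = 0 then (n : ℝ) else 0 := by
  split_ifs with hm0
  · simp [hm0]
  have hn : (n : ℝ) ≠ 0 := by
    have := (abs_nonneg m).trans_lt hm
    exact Nat.cast_ne_zero.mpr (by omega)
  have hsin : sin (m * π / n / 2) ≠ 0 := by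
    have := sin_int_mul_pi_div_ne_zero (n := 2 * n) hm0 (by exact_mod_cast hm)
    rwa [div_div, mul_comm (n : ℝ), ← Nat.cast_ofNat, ← Nat.cast_mul]
  have htel := two_mul_sin_half_mul_sum_Icc_cos_midpoint (m * π / n) n
  rw [mul_div_cancel₀ _ hn, sin_int_mul_pi] at htel
  exact (mul_eq_zero.mp htel).resolve_left (mul_ne_zero two_ne_zero hsin)

theorem integral_cos_mul_sub (a b c : ℝ) (hc : c ≠ 0) :
    ∫ x in a..b, cos (c * (x - a)) = sin (c * (b - a)) / c := by
  rw [integral_comp_sub_right (fun y => cos (c * y)) a,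
    integral_comp_mul_left (fun y => cos y) hc]
  simp [integral_cos, smul_eq_mul, div_eq_inv_mul]

noncomputable def phiScale (m : ℕ) : ℝ := if m = 0 then 1 else √2

theorem phiU_eq (a ω : ℝ) (m : ℕ) (x : ℝ) :
    phiU a ω m x = phiScale m * cos (m * ω * (x - a)) := by
  unfold phiU phiScale
  split_ifs with hm <;> simp [hm]

theorem phiU_mul_phiU (a ω : ℝ) (j k : ℕ) (x : ℝ) :
    phiU a ω j x * phiU a ω k x = phiScale j * phiScale k / 2 *
      (cos (((j - k : ℤ) : ℝ) * ω * (x - a)) + cos (((j + k : ℤ) : ℝ) * ω * (x - a))) := by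
  rw [phiU_eq, phiU_eq]
  push_cast
  rw [sub_mul, sub_mul, add_mul, add_mul, ← two_mul_cos_mul_cos]
  ring

theorem phiScale_mul_phiScale_div_two (j k : ℕ) :
    phiScale j * phiScale k / 2 *
        ((if (j - k : ℤ) = 0 then 1 else 0) + (if (j + k : ℤ) = 0 then 1 else 0))
      = if j = k then 1 else 0 := by
  unfold phiScale
  split_ifs <;> first | omega | norm_num

section MidpointRule

variable {a b ω : ℝ} (hω : ω * (b - a) = π)
include hω

theorem sum_midpoint_cos_int_mul {n : ℕ} {m : ℤ} (hm : |m| < 2 * n) :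
    ∑ i ∈ Icc 1 n, 1 / (n : ℝ) * cos (m * ω * (a + ((i : ℝ) - 1 / 2) * (b - a) / n - a))
      = if m = 0 then 1 else 0 := by
  have hn : (n : ℝ) ≠ 0 := by
    have := (abs_nonneg m).trans_lt hm
    exact Nat.cast_ne_zero.mpr (by omega)
  have hnode : ∀ i : ℕ, m * ω * (a + ((i : ℝ) - 1 / 2) * (b - a) / n - a)
      = ((i : ℝ) - 1 / 2) * (m * π / n) := fun i => by rw [← hω]; field_simp; ring
  simp_rw [hnode, ← mul_sum, sum_Icc_cos_midpoint_int_mul_pi_div hm]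
  split_ifs <;> simp [hn]

theorem one_div_mul_integral_cos_int_mul (hab : a ≠ b) (m : ℤ) :
    1 / (b - a) * ∫ x in a..b, cos (m * ω * (x - a)) = if m = 0 then 1 else 0 := by
  have hba : b - a ≠ 0 := sub_ne_zero.mpr hab.symm
  split_ifs with hm
  · simp [hm, hba]
  have hω0 : ω ≠ 0 := by rintro rfl; simp [pi_ne_zero.symm] at hω
  rw [integral_cos_mul_sub a b _ (mul_ne_zero (Int.cast_ne_zero.mpr hm) hω0), mul_assoc, hω,
    sin_int_mul_pi, zero_div, mul_zero]

end MidpointRule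

theorem stmt_18_general (a b ω : ℝ) (hab : a < b) (hω : ω = Real.pi / (b - a))
    (n : ℕ) (j k : ℕ) (hj : j < n) (hk : k ≤ n) :
    (∑ i ∈ Finset.Icc 1 n, (1 / (n : ℝ)) *
        phiU a ω j (a + ((i : ℝ) - 1/2) * (b - a) / n) *
        phiU a ω k (a + ((i : ℝ) - 1/2) * (b - a) / n)
      = if j = k then 1 else 0) ∧
    ((1 / (b - a)) * ∫ x in a..b, phiU a ω j x * phiU a ω k x
      = if j = k then 1 else 0) := by
  have hωπ : ω * (b - a) = π := by rw [hω]; field_simp [(sub_pos.mpr hab).ne']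
  set c := phiScale j * phiScale k / 2
  constructor
  · calc _ = c * (∑ i ∈ Icc 1 n, 1 / (n : ℝ) *
              cos (((j - k : ℤ) : ℝ) * ω * (a + ((i : ℝ) - 1 / 2) * (b - a) / n - a)) +
            ∑ i ∈ Icc 1 n, 1 / (n : ℝ) *
              cos (((j + k : ℤ) : ℝ) * ω * (a + ((i : ℝ) - 1 / 2) * (b - a) / n - a))) := by
          rw [← sum_add_distrib, mul_sum]
          refine sum_congr rfl fun i _ => ?_
          rw [mul_assoc, phiU_mul_phiU]
          ring
      _ = _ := by
          rw [sum_midpoint_cos_int_mul hωπ (by rw [abs_lt]; omega),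
            sum_midpoint_cos_int_mul hωπ (by rw [abs_lt]; omega), phiScale_mul_phiScale_div_two]
  · have hint : ∀ m : ℤ,
        IntervalIntegrable (fun x => cos (m * ω * (x - a))) MeasureTheory.volume a b :=
      fun m => by apply Continuous.intervalIntegrable; fun_prop
    simp_rw [phiU_mul_phiU, integral_const_mul, integral_add (hint _) (hint _)]
    rw [mul_left_comm, mul_add, one_div_mul_integral_cos_int_mul hωπ hab.ne, one_div_mul_integral_cos_int_mul hωπ hab.ne,
      phiScale_mul_phiScale_div_two]

theorem stmt_18 (a b ω : ℝ) (hab : a < b) (hω : ω = Real.pi / (b - a))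
    (n : ℕ) (hn : 1 ≤ n) (j k : ℕ) (hj : j < n) (hk : k ≤ n) :
    (∑ i ∈ Finset.Icc 1 n, (1 / (n : ℝ)) *
        phiU a ω j (a + ((i : ℝ) - 1/2) * (b - a) / n) *
        phiU a ω k (a + ((i : ℝ) - 1/2) * (b - a) / n)
      = if j = k then 1 else 0) ∧
    ((1 / (b - a)) * ∫ x in a..b, phiU a ω j x * phiU a ω k x
      = if j = k then 1 else 0) :=
  stmt_18_general a b ω hab hω n j k hj hk
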